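/- For a partition λ with p-modular Maya decomposition M^{(0)}, ..., M^{(p-1)} of its charge-zero Maya diagram, the product of all hook lengths of λ factorizes as H(λ) = ∏_i ∏_{m∈M^{(i)}, n∉M^{(i)}, m>n} p(m−n) times ∏_{i≠j} ∏_{m∈M^{(i)}, n∉M^{(j)}, pm+i>pn+j} ((pm+i)−(pn+j)); the first factor is the product of the hook lengths divisible by p and the second is the product of those not divisible by p. -/

import Mathlib

/-!
Along the boundary of `λ`, the beads `rowLen i - (i + 1)` and the gaps `j - colLen j` partition
`ℤ`, and a cell `(i, j)` lies in `λ` exactly when `gap j < bead i`, its hook length then being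
`bead i - gap j`. So `H(λ)` is the product of `m - n` over the pairs `n < m` with `m` a bead and
`n` a gap. Writing `m = p m' + i` and `n = p n' + j` with `0 ≤ i, j < p`, such a difference is
divisible by `p` exactly when `i = j`, and then it equals `p (m' - n')` for a bead `m'` and a gap
`n'` of `M^{(i)}`.
-/

open scoped BigOperators

/-- The charge-zero Maya diagram of a Young diagram. -/
def mayaHat (μ : YoungDiagram) : Set ℤ :=
  {x | ∃ i : ℕ, x = (μ.rowLen i : ℤ) - (i + 1)}

/-- The `i`-th Maya diagram in the `p`-modular decomposition of the charge-zero
Maya diagram of `μ`. -/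
def quotientSet (p : ℕ) (μ : YoungDiagram) (i : Fin p) : Set ℤ :=
  {m | (p : ℤ) * m + (i : ℤ) ∈ mayaHat μ}

/-- The hook length of a box of a Young diagram. -/
def hook (μ : YoungDiagram) (c : ℕ × ℕ) : ℕ :=
  (μ.rowLen c.1 - c.2) + (μ.colLen c.2 - c.1) - 1

def mayaHooks (A : Set ℤ) : Set (ℤ × ℤ) := {mn | mn.1 ∈ A ∧ mn.2 ∉ A ∧ mn.2 < mn.1}

namespace YoungDiagram

variable (μ : YoungDiagram)

def bead (i : ℕ) : ℤ := μ.rowLen i - (i + 1)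

def gap (j : ℕ) : ℤ := j - μ.colLen j

variable {μ}

theorem gap_lt_bead_of_mem {i j : ℕ} (h : (i, j) ∈ μ) : μ.gap j < μ.bead i := by
  have := mem_iff_lt_rowLen.mp h
  have := mem_iff_lt_colLen.mp h
  simp only [bead, gap]
  omega

theorem bead_lt_gap_of_notMem {i j : ℕ} (h : (i, j) ∉ μ) : μ.bead i < μ.gap j := by
  have := mt mem_iff_lt_rowLen.mpr h
  have := mt mem_iff_lt_colLen.mpr h
  simp only [bead, gap]
  omega

theorem mem_iff_gap_lt_bead {i j : ℕ} : (i, j) ∈ μ ↔ μ.gap j < μ.bead i :=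
  ⟨gap_lt_bead_of_mem, fun h => by_contra fun h' => (bead_lt_gap_of_notMem h').asymm h⟩

theorem bead_ne_gap (i j : ℕ) : μ.bead i ≠ μ.gap j := by
  by_cases h : (i, j) ∈ μ
  · exact (gap_lt_bead_of_mem h).ne'
  · exact (bead_lt_gap_of_notMem h).ne

theorem hook_eq_bead_sub_gap {c : ℕ × ℕ} (h : c ∈ μ) :
    (hook μ c : ℤ) = μ.bead c.1 - μ.gap c.2 := by
  have := mem_iff_lt_rowLen.mp h
  have := mem_iff_lt_colLen.mp h
  simp only [hook, bead, gap]
  omega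

variable (μ)

theorem bead_strictAnti : StrictAnti μ.bead :=
  strictAnti_nat_of_succ_lt fun i => by
    have := μ.rowLen_anti i (i + 1) i.le_succ
    simp only [bead]
    omega

theorem gap_strictMono : StrictMono μ.gap :=
  strictMono_nat_of_lt_succ fun j => by
    have := μ.colLen_anti j (j + 1) j.le_succ
    simp only [gap]
    omega

/-- The first `colLen 0` beads and the first `rowLen 0` gaps are distinct points of an interval
with `colLen 0 + rowLen 0` elements, so they fill it. -/
theorem image_bead_union_image_gap :
    (Finset.range (μ.colLen 0)).image μ.bead ∪ (Finset.range (μ.rowLen 0)).image μ.gap =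
      Finset.Icc (-(μ.colLen 0 : ℤ)) (μ.rowLen 0 - 1) := by
  refine Finset.eq_of_subset_of_card_le ?_ ?_
  · intro x hx
    simp only [Finset.mem_union, Finset.mem_image, Finset.mem_range] at hx
    rw [Finset.mem_Icc]
    rcases hx with ⟨i, hi, rfl⟩ | ⟨j, hj, rfl⟩
    · have := mem_iff_lt_rowLen.mp (mem_iff_lt_colLen.mpr hi)
      have := μ.rowLen_anti 0 i i.zero_le
      simp only [bead]
      omega
    · have := μ.colLen_anti 0 j j.zero_le
      simp only [gap]
      omega
  · have hdisj : Disjoint ((Finset.range (μ.colLen 0)).image μ.bead)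
        ((Finset.range (μ.rowLen 0)).image μ.gap) := by
      simp only [Finset.disjoint_left, Finset.mem_image]
      rintro _ ⟨i, -, rfl⟩ ⟨j, -, h⟩
      exact bead_ne_gap i j h.symm
    rw [Finset.card_union_of_disjoint hdisj,
      Finset.card_image_of_injective _ (bead_strictAnti μ).injective,
      Finset.card_image_of_injective _ (gap_strictMono μ).injective,
      Finset.card_range, Finset.card_range, Int.card_Icc]
    omega

theorem mem_range_bead_or_gap (x : ℤ) : x ∈ Set.range μ.bead ∨ x ∈ Set.range μ.gap := by
  by_cases hright : (μ.rowLen 0 : ℤ) ≤ x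
  · have : μ.colLen x.toNat = 0 := by
      by_contra h
      have := mem_iff_lt_rowLen.mp (mem_iff_lt_colLen.mpr (Nat.pos_of_ne_zero h))
      omega
    exact Or.inr ⟨x.toNat, by simp only [gap, this]; omega⟩
  by_cases hleft : x < -(μ.colLen 0 : ℤ)
  · have : μ.rowLen (-x - 1).toNat = 0 := by
      by_contra h
      have := mem_iff_lt_colLen.mp (mem_iff_lt_rowLen.mpr (Nat.pos_of_ne_zero h))
      omega
    exact Or.inl ⟨(-x - 1).toNat, by simp only [bead, this]; omega⟩
  have hx : x ∈ Finset.Icc (-(μ.colLen 0 : ℤ)) (μ.rowLen 0 - 1) := by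
    rw [Finset.mem_Icc]
    omega
  rw [← image_bead_union_image_gap, Finset.mem_union, Finset.mem_image, Finset.mem_image] at hx
  exact hx.imp (fun ⟨i, _, h⟩ => ⟨i, h⟩) (fun ⟨j, _, h⟩ => ⟨j, h⟩)

theorem mayaHat_eq_range_bead : mayaHat μ = Set.range μ.bead :=
  Set.ext fun _ => exists_congr fun _ => eq_comm

theorem compl_mayaHat : (mayaHat μ)ᶜ = Set.range μ.gap := by
  ext x
  rw [Set.mem_compl_iff, mayaHat_eq_range_bead]
  refine ⟨(mem_range_bead_or_gap μ x).resolve_left, ?_⟩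
  rintro ⟨j, rfl⟩ ⟨i, hi⟩
  exact bead_ne_gap i j hi

def beadGap (c : ℕ × ℕ) : ℤ × ℤ := (μ.bead c.1, μ.gap c.2)

theorem beadGap_injective : Function.Injective μ.beadGap := fun _ _ h =>
  Prod.ext ((bead_strictAnti μ).injective (congrArg Prod.fst h))
    ((gap_strictMono μ).injective (congrArg Prod.snd h))

theorem image_beadGap_cells :
    μ.beadGap '' μ.cells = mayaHooks (mayaHat μ) := by
  ext ⟨m, n⟩
  rw [mayaHooks, Set.mem_ofPred_eq, ← Set.mem_compl_iff, compl_mayaHat, mayaHat_eq_range_bead]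
  constructor
  · rintro ⟨⟨i, j⟩, hc, he⟩
    obtain ⟨rfl, rfl⟩ := Prod.mk.inj he
    exact ⟨⟨i, rfl⟩, ⟨j, rfl⟩, gap_lt_bead_of_mem ((mem_cells _).mp hc)⟩
  · rintro ⟨⟨i, rfl⟩, ⟨j, rfl⟩, h⟩
    exact ⟨(i, j), (mem_cells _).mpr (mem_iff_gap_lt_bead.mpr h), rfl⟩

theorem prod_hook_eq_finprod_mem {M : Type*} [CommMonoid M] (f : ℤ → M) :
    ∏ c ∈ μ.cells, f (hook μ c) =
      ∏ᶠ mn ∈ mayaHooks (mayaHat μ), f (mn.1 - mn.2) := by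
  rw [← image_beadGap_cells, finprod_mem_image (beadGap_injective μ).injOn,
    finprod_mem_coe_finset]
  exact Finset.prod_congr rfl fun c hc => by
    rw [hook_eq_bead_sub_gap ((mem_cells c).mp hc), beadGap]

theorem finite_mayaHooks_mayaHat : (mayaHooks (mayaHat μ)).Finite :=
  image_beadGap_cells μ ▸ μ.cells.finite_toSet.image _

end YoungDiagram

theorem Equiv.finprod_mem_eq_prod_finprod_mem {ι α β M : Type*} [Fintype ι] [CommMonoid M]
    (e : ι × α ≃ β) {s : Set β} (hs : s.Finite) (f : β → M) :
    ∏ᶠ b ∈ s, f b = ∏ i, ∏ᶠ a ∈ (fun a => e (i, a)) ⁻¹' s, f (e (i, a)) := by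
  have hfin : (Function.mulSupport fun x => s.mulIndicator f (e x)).Finite :=
    (hs.preimage e.injective.injOn).subset fun x hx =>
      Set.mulSupport_mulIndicator_subset (f := f) hx
  rw [finprod_mem_def, ← finprod_comp_equiv e, finprod_curry _ hfin,
    finprod_eq_prod_of_fintype]
  refine Finset.prod_congr rfl fun i _ => ?_
  rw [finprod_mem_def]
  rfl

def Int.finProdEquiv (p : ℕ) [NeZero p] : Fin p × ℤ ≃ ℤ :=
  (Equiv.prodComm _ _).trans (Int.divModEquiv p).symm

@[simp]
theorem Int.finProdEquiv_apply (p : ℕ) [NeZero p] (x : Fin p × ℤ) :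
    Int.finProdEquiv p x = p * x.2 + x.1 := by
  simp [Int.finProdEquiv, mul_comm]

theorem finprod_mem_eq_prod_prod_residues {M : Type*} [CommMonoid M] (p : ℕ) [NeZero p]
    {s : Set (ℤ × ℤ)} (hs : s.Finite) (f : ℤ × ℤ → M) :
    ∏ᶠ x ∈ s, f x = ∏ i : Fin p, ∏ j : Fin p,
      ∏ᶠ mn ∈ {mn : ℤ × ℤ | ((p : ℤ) * mn.1 + i, (p : ℤ) * mn.2 + j) ∈ s},
        f ((p : ℤ) * mn.1 + i, (p : ℤ) * mn.2 + j) := by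
  let e : (Fin p × Fin p) × (ℤ × ℤ) ≃ ℤ × ℤ := (Equiv.prodProdProdComm _ _ _ _).trans
    ((Int.finProdEquiv p).prodCongr (Int.finProdEquiv p))
  have he : ∀ i j mn, e ((i, j), mn) = ((p : ℤ) * mn.1 + i, (p : ℤ) * mn.2 + j) :=
    fun _ _ _ => by simp [e]
  simp only [e.finprod_mem_eq_prod_finprod_mem hs, Fintype.prod_prod_type, he]
  rfl

theorem Int.natCast_dvd_mul_add_sub_mul_add_iff {p : ℕ} (i j : Fin p) (m n : ℤ) :
    (p : ℤ) ∣ (p * m + i) - (p * n + j) ↔ i = j := by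
  have hsplit : (p * m + i) - (p * n + j) = p * (m - n) + ((i : ℤ) - j) := by ring
  rw [hsplit, dvd_add_right (dvd_mul_right _ _)]
  refine ⟨fun h => Fin.ext ?_, fun h => by rw [h, sub_self]; exact dvd_zero _⟩
  have := Int.eq_zero_of_abs_lt_dvd h (abs_sub_lt_iff.mpr (by omega))
  omega

section MayaHooks

variable (p : ℕ) [NeZero p]

theorem preimage_mayaHooks_of_residue (A : Set ℤ) (i : Fin p) :
    {mn : ℤ × ℤ | ((p : ℤ) * mn.1 + i, (p : ℤ) * mn.2 + i) ∈ mayaHooks A} =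
      mayaHooks {m | (p : ℤ) * m + i ∈ A} := by
  have hp : (0 : ℤ) < p := by exact_mod_cast Nat.pos_of_neZero p
  ext mn
  simp only [mayaHooks, Set.mem_ofPred_eq, add_lt_add_iff_right, mul_lt_mul_iff_right₀ hp]

theorem finprod_mem_mayaHooks_dvd {A : Set ℤ} (hA : (mayaHooks A).Finite) :
    ∏ᶠ x ∈ mayaHooks A, (if (p : ℤ) ∣ x.1 - x.2 then x.1 - x.2 else 1) =
      ∏ i : Fin p, ∏ᶠ mn ∈ mayaHooks {m | (p : ℤ) * m + i ∈ A}, (p : ℤ) * (mn.1 - mn.2) := by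
  rw [finprod_mem_eq_prod_prod_residues p hA]
  refine Finset.prod_congr rfl fun i _ => ?_
  rw [Finset.prod_eq_single i]
  · rw [preimage_mayaHooks_of_residue]
    refine finprod_mem_congr rfl fun mn _ => ?_
    rw [if_pos ((Int.natCast_dvd_mul_add_sub_mul_add_iff i i _ _).mpr rfl)]
    ring
  · exact fun j _ hji => finprod_mem_eq_one_of_forall_eq_one fun mn _ =>
      if_neg (mt (Int.natCast_dvd_mul_add_sub_mul_add_iff i j _ _).mp (Ne.symm hji))
  · simp

theorem finprod_mem_mayaHooks_not_dvd {A : Set ℤ} (hA : (mayaHooks A).Finite) :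
    ∏ᶠ x ∈ mayaHooks A, (if ¬(p : ℤ) ∣ x.1 - x.2 then x.1 - x.2 else 1) =
      ∏ i : Fin p, ∏ j ∈ Finset.univ.erase i,
        ∏ᶠ mn ∈ {mn : ℤ × ℤ | ((p : ℤ) * mn.1 + i, (p : ℤ) * mn.2 + j) ∈ mayaHooks A},
          (((p : ℤ) * mn.1 + i) - ((p : ℤ) * mn.2 + j)) := by
  rw [finprod_mem_eq_prod_prod_residues p hA]
  refine Finset.prod_congr rfl fun i _ => ?_
  refine (Finset.prod_erase _ ?_).symm.trans (Finset.prod_congr rfl fun j hj => ?_)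
  · exact finprod_mem_eq_one_of_forall_eq_one fun mn _ =>
      if_neg (not_not.mpr ((Int.natCast_dvd_mul_add_sub_mul_add_iff i i _ _).mpr rfl))
  · exact finprod_mem_congr rfl fun mn _ => if_pos <|
      mt (Int.natCast_dvd_mul_add_sub_mul_add_iff i j _ _).mp (Finset.ne_of_mem_erase hj).symm

end MayaHooks

/-- The factorization of the product of hook lengths into `p`-fold and non-`p`-fold
parts, expressed via the `p`-modular decomposition of the Maya diagram. -/
theorem hook_product_factorization (p : ℕ) (hp : 0 < p) (lam : YoungDiagram) :
    (∏ c ∈ lam.cells.filter (fun c => p ∣ hook lam c), (hook lam c : ℤ)) =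
      (∏ i : Fin p,
        ∏ᶠ mn ∈ {mn : ℤ × ℤ | mn.1 ∈ quotientSet p lam i ∧
            mn.2 ∉ quotientSet p lam i ∧ mn.2 < mn.1},
          ((p : ℤ) * (mn.1 - mn.2))) ∧
    (∏ c ∈ lam.cells.filter (fun c => ¬ p ∣ hook lam c), (hook lam c : ℤ)) =
      (∏ i : Fin p, ∏ j ∈ Finset.univ.erase i,
        ∏ᶠ mn ∈ {mn : ℤ × ℤ | mn.1 ∈ quotientSet p lam i ∧
            mn.2 ∉ quotientSet p lam j ∧
            (p : ℤ) * mn.2 + (j : ℤ) < (p : ℤ) * mn.1 + (i : ℤ)},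
          (((p : ℤ) * mn.1 + (i : ℤ)) - ((p : ℤ) * mn.2 + (j : ℤ)))) ∧
    (∏ c ∈ lam.cells, (hook lam c : ℤ)) =
      (∏ i : Fin p,
        ∏ᶠ mn ∈ {mn : ℤ × ℤ | mn.1 ∈ quotientSet p lam i ∧
            mn.2 ∉ quotientSet p lam i ∧ mn.2 < mn.1},
          ((p : ℤ) * (mn.1 - mn.2))) *
      (∏ i : Fin p, ∏ j ∈ Finset.univ.erase i,
        ∏ᶠ mn ∈ {mn : ℤ × ℤ | mn.1 ∈ quotientSet p lam i ∧
            mn.2 ∉ quotientSet p lam j ∧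
            (p : ℤ) * mn.2 + (j : ℤ) < (p : ℤ) * mn.1 + (i : ℤ)},
          (((p : ℤ) * mn.1 + (i : ℤ)) - ((p : ℤ) * mn.2 + (j : ℤ)))) := by
  have : NeZero p := ⟨hp.ne'⟩
  have hdvd := lam.prod_hook_eq_finprod_mem fun z => if (p : ℤ) ∣ z then z else 1
  have hndvd := lam.prod_hook_eq_finprod_mem fun z => if ¬(p : ℤ) ∣ z then z else 1
  rw [finprod_mem_mayaHooks_dvd p lam.finite_mayaHooks_mayaHat] at hdvd
  rw [finprod_mem_mayaHooks_not_dvd p lam.finite_mayaHooks_mayaHat] at hndvd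
  simp only [Int.natCast_dvd_natCast, ← Finset.prod_filter] at hdvd hndvd
  refine ⟨hdvd, hndvd, ?_⟩
  rw [← Finset.prod_filter_mul_prod_filter_not lam.cells (fun c => p ∣ hook lam c)]
  exact congrArg₂ (· * ·) hdvd hndvd
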